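/- arXiv:2010.13747 — 4 statements merged into one kernel-verified Lean document; each statement's English description precedes it below -/
import Mathlib

section
/- Let S and S_p be n×n real symmetric matrices with ‖S‖₂ ≤ 1 and ‖S_p‖₂ ≤ 1, and set E = S_p − S. For a polynomial graph filter g_θ with real coefficients θ₀, …, θ_K, defined on matrices by g_θ(M) = Σ_{k=0}^{K} θ_k · Mᵏ, it holds that ‖g_θ(S) − g_θ(S_p)‖₂ ≤ (Σ_{k=1}^{K} k·|θ_k|) · ‖E‖₂. -/
open scoped Matrix.Norms.L2Operator

/-- The operator norm of a real matrix induced by the Euclidean vector norm. -/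
noncomputable def opNorm {m n : Type*} [Fintype m] [Fintype n] [DecidableEq n]
    (M : Matrix m n ℝ) : ℝ :=
  ‖LinearMap.toContinuousLinearMap (Matrix.toEuclideanLin M)‖

lemma opNorm_eq_norm {m n : Type*} [Fintype m] [Fintype n] [DecidableEq n] [DecidableEq m]
    (M : Matrix m n ℝ) : opNorm M = ‖M‖ := by
  rw [Matrix.l2_opNorm_def]; rfl

lemma matrix_norm_one_le {n : ℕ} : ‖(1 : Matrix (Fin n) (Fin n) ℝ)‖ ≤ 1 := by
  rw [Matrix.cstar_norm_def, map_one]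
  exact ContinuousLinearMap.norm_id_le

lemma pow_norm_le_one {R : Type*} [NormedRing R] (a : R)
    (ha : ‖a‖ ≤ 1) (hone : ‖(1 : R)‖ ≤ 1) (k : ℕ) : ‖a ^ k‖ ≤ 1 := by
  induction k with
  | zero => simpa using hone
  | succ k ih =>
    calc ‖a ^ (k + 1)‖ = ‖a ^ k * a‖ := by rw [pow_succ]
      _ ≤ ‖a ^ k‖ * ‖a‖ := norm_mul_le _ _
      _ ≤ 1 * 1 := mul_le_mul ih ha (norm_nonneg _) zero_le_one
      _ = 1 := one_mul 1

lemma pow_sub_pow_norm_le {R : Type*} [NormedRing R] (a b : R)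
    (ha : ‖a‖ ≤ 1) (hb : ‖b‖ ≤ 1) (hone : ‖(1 : R)‖ ≤ 1) (k : ℕ) :
    ‖a ^ k - b ^ k‖ ≤ k * ‖a - b‖ := by
  induction k with
  | zero => simp
  | succ k ih =>
    have h : a ^ (k + 1) - b ^ (k + 1) = a ^ k * (a - b) + (a ^ k - b ^ k) * b := by
      rw [pow_succ, pow_succ]; noncomm_ring
    rw [h]
    calc ‖a ^ k * (a - b) + (a ^ k - b ^ k) * b‖
        ≤ ‖a ^ k * (a - b)‖ + ‖(a ^ k - b ^ k) * b‖ := norm_add_le _ _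
      _ ≤ ‖a ^ k‖ * ‖a - b‖ + ‖a ^ k - b ^ k‖ * ‖b‖ :=
          add_le_add (norm_mul_le _ _) (norm_mul_le _ _)
      _ ≤ 1 * ‖a - b‖ + (k * ‖a - b‖) * 1 :=
          add_le_add
            (mul_le_mul_of_nonneg_right (pow_norm_le_one a ha hone k) (norm_nonneg _))
            (mul_le_mul ih hb (norm_nonneg _) (by positivity))
      _ = (↑(k + 1) : ℝ) * ‖a - b‖ := by push_cast; ring

/-- Proposition 1: stability of polynomial graph filters.  For symmetric `S, Sₚ` with
operator norm at most `1`, the polynomial filter `g_θ(M) = Σ_{k=0}^K θ_k Mᵏ` satisfies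
`‖g_θ(S) − g_θ(Sₚ)‖₂ ≤ (Σ_{k=1}^K k |θ_k|) ‖E‖₂` where `E = Sₚ − S`. -/
theorem stmt1 {n : ℕ} (S Sp : Matrix (Fin n) (Fin n) ℝ)
    (hS : S.IsSymm) (hSp : Sp.IsSymm)
    (hSnorm : opNorm S ≤ 1) (hSpnorm : opNorm Sp ≤ 1)
    (K : ℕ) (θ : ℕ → ℝ) :
    opNorm ((∑ k ∈ Finset.range (K + 1), θ k • S ^ k) -
        (∑ k ∈ Finset.range (K + 1), θ k • Sp ^ k)) ≤
      (∑ k ∈ Finset.Icc 1 K, (k : ℝ) * |θ k|) * opNorm (Sp - S) := by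
  simp only [opNorm_eq_norm] at *
  rw [← Finset.sum_sub_distrib]
  have key : ∀ k, ‖θ k • S ^ k - θ k • Sp ^ k‖ ≤ (k : ℝ) * |θ k| * ‖Sp - S‖ := by
    intro k
    rw [← smul_sub, norm_smul, Real.norm_eq_abs]
    have h := pow_sub_pow_norm_le S Sp hSnorm hSpnorm matrix_norm_one_le k
    calc |θ k| * ‖S ^ k - Sp ^ k‖ ≤ |θ k| * ((k : ℝ) * ‖S - Sp‖) := by gcongr
      _ = (k : ℝ) * |θ k| * ‖Sp - S‖ := by rw [norm_sub_rev]; ring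
  have hsum : ∑ k ∈ Finset.range (K + 1), (k : ℝ) * |θ k| =
      ∑ k ∈ Finset.Icc 1 K, (k : ℝ) * |θ k| := by
    refine (Finset.sum_subset ?_ ?_).symm
    · intro x hx
      simp only [Finset.mem_Icc] at hx
      simp only [Finset.mem_range]
      omega
    · intro x hx hx'
      simp only [Finset.mem_range] at hx
      simp only [Finset.mem_Icc] at hx'
      have : x = 0 := by omega
      simp [this]
  calc ‖∑ k ∈ Finset.range (K + 1), (θ k • S ^ k - θ k • Sp ^ k)‖
      ≤ ∑ k ∈ Finset.range (K + 1), ((k : ℝ) * |θ k| * ‖Sp - S‖) :=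
        (norm_sum_le _ _).trans (Finset.sum_le_sum fun k _ => key k)
    _ = (∑ k ∈ Finset.Icc 1 K, (k : ℝ) * |θ k|) * ‖Sp - S‖ := by
        rw [← Finset.sum_mul, hsum]
end

section
/- Let G and G_p be finite simple undirected graphs on the same vertex set V such that every vertex has the same degree in G and G_p, and let γ ≥ 0 with d_u + γ > 0 for all u. Let E = S_{p,γ} − S_γ be the difference of normalised augmented adjacency matrices. Fix a vertex u, let 𝒟_u be the set of vertices v adjacent to u in G but not in G_p and 𝒜_u the set of vertices adjacent to u in G_p but not in G, let R_u be a natural number with |𝒟_u| ≤ R_u and |𝒜_u| ≤ R_u, and let δ_u be a lower bound on the degree d_v of every v ∈ 𝒟_u ∪ 𝒜_u. Then ‖E_u^⊤‖₁ ≤ 2·R_u / √((d_u+γ)(δ_u+γ)). -/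
/-- The normalised augmented adjacency matrix
`S_γ = (D+γI)^{-1/2} (A+γI) (D+γI)^{-1/2}` of a finite simple graph. -/
noncomputable def naam {V : Type*} [Fintype V] [DecidableEq V]
    (G : SimpleGraph V) [DecidableRel G.Adj] (γ : ℝ) : Matrix V V ℝ :=
  Matrix.diagonal (fun u => (Real.sqrt ((G.degree u : ℝ) + γ))⁻¹) *
    (G.adjMatrix ℝ + γ • (1 : Matrix V V ℝ)) *
      Matrix.diagonal (fun u => (Real.sqrt ((G.degree u : ℝ) + γ))⁻¹)

/-- For a degree-preserving perturbation, if at most `R_u` edges are deleted and at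
most `R_u` edges are added around `u`, and `δ_u` lower bounds the degree of every
vertex `u` disconnects from or connects to, then the Manhattan norm of the `u`-th row
of `E = S_{p,γ} − S_γ` is at most `2 R_u / √((d_u+γ)(δ_u+γ))`. -/
theorem stmt6 {V : Type*} [Fintype V] [DecidableEq V]
    (G Gp : SimpleGraph V) [DecidableRel G.Adj] [DecidableRel Gp.Adj]
    (hdeg : ∀ u, G.degree u = Gp.degree u)
    (γ : ℝ) (hγ : 0 ≤ γ) (hpos : ∀ u, 0 < (G.degree u : ℝ) + γ)
    (u : V) (Ru : ℕ) (δu : ℕ)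
    (hRD : (Finset.univ.filter (fun v => G.Adj u v ∧ ¬ Gp.Adj u v)).card ≤ Ru)
    (hRA : (Finset.univ.filter (fun v => Gp.Adj u v ∧ ¬ G.Adj u v)).card ≤ Ru)
    (hδ : ∀ v, (G.Adj u v ∧ ¬ Gp.Adj u v) ∨ (Gp.Adj u v ∧ ¬ G.Adj u v) →
      δu ≤ G.degree v)
    (hδpos : 0 < (δu : ℝ) + γ) :
    ∑ v, |(naam Gp γ - naam G γ) u v| ≤
      2 * (Ru : ℝ) / Real.sqrt (((G.degree u : ℝ) + γ) * ((δu : ℝ) + γ)) := by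

  classical
  set f : V → ℝ := fun v => (Real.sqrt ((G.degree v : ℝ) + γ))⁻¹ with hf
  have hfnn : ∀ v, 0 ≤ f v := fun v => inv_nonneg.2 (Real.sqrt_nonneg _)
  set C : ℝ := (Real.sqrt (((G.degree u : ℝ) + γ) * ((δu : ℝ) + γ)))⁻¹ with hC
  have hCnn : 0 ≤ C := inv_nonneg.2 (Real.sqrt_nonneg _)
  set D : Finset V := Finset.univ.filter (fun v => G.Adj u v ∧ ¬ Gp.Adj u v) with hD
  set A : Finset V := Finset.univ.filter (fun v => Gp.Adj u v ∧ ¬ G.Adj u v) with hA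
  have hentry : ∀ v, (naam Gp γ - naam G γ) u v
      = f u * f v * ((Gp.adjMatrix ℝ) u v - (G.adjMatrix ℝ) u v) := by
    intro v
    simp only [naam, Matrix.sub_apply, Matrix.mul_diagonal, Matrix.diagonal_mul,
      Matrix.add_apply, Matrix.smul_apply, Matrix.one_apply, hf, ← hdeg]
    ring
  have key : ∀ v, |(naam Gp γ - naam G γ) u v| ≤ if v ∈ D ∪ A then C else 0 := by
    intro v
    rw [hentry v]
    by_cases h1 : G.Adj u v <;> by_cases h2 : Gp.Adj u v
    · simp only [SimpleGraph.adjMatrix_apply, if_pos h1, if_pos h2, sub_self, mul_zero,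
        abs_zero]
      split <;> simp [hCnn]
    · have hv : v ∈ D ∪ A := by simp [hD, h1, h2]
      rw [if_pos hv]
      have hdv : (δu : ℝ) ≤ (G.degree v : ℝ) := by
        exact_mod_cast hδ v (Or.inl ⟨h1, h2⟩)
      have hfv : f v ≤ (Real.sqrt ((δu : ℝ) + γ))⁻¹ := by
        apply inv_anti₀ (Real.sqrt_pos.2 hδpos)
        exact Real.sqrt_le_sqrt (by linarith)
      calc |f u * f v * ((Gp.adjMatrix ℝ) u v - (G.adjMatrix ℝ) u v)|
          = f u * f v := by
            simp [h1, h2, abs_of_nonneg, mul_nonneg (hfnn u) (hfnn v)]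
        _ ≤ f u * (Real.sqrt ((δu : ℝ) + γ))⁻¹ :=
            mul_le_mul_of_nonneg_left hfv (hfnn u)
        _ = C := by
            rw [hC, Real.sqrt_mul (le_of_lt (hpos u)), mul_inv, hf]
    · have hv : v ∈ D ∪ A := by simp [hA, h1, h2]
      rw [if_pos hv]
      have hdv : (δu : ℝ) ≤ (G.degree v : ℝ) := by
        exact_mod_cast hδ v (Or.inr ⟨h2, h1⟩)
      have hfv : f v ≤ (Real.sqrt ((δu : ℝ) + γ))⁻¹ := by
        apply inv_anti₀ (Real.sqrt_pos.2 hδpos)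
        exact Real.sqrt_le_sqrt (by linarith)
      calc |f u * f v * ((Gp.adjMatrix ℝ) u v - (G.adjMatrix ℝ) u v)|
          = f u * f v := by
            simp [h1, h2, abs_of_nonneg, mul_nonneg (hfnn u) (hfnn v)]
        _ ≤ f u * (Real.sqrt ((δu : ℝ) + γ))⁻¹ :=
            mul_le_mul_of_nonneg_left hfv (hfnn u)
        _ = C := by
            rw [hC, Real.sqrt_mul (le_of_lt (hpos u)), mul_inv, hf]
    · simp only [SimpleGraph.adjMatrix_apply, if_neg h1, if_neg h2, sub_self, mul_zero,
        abs_zero]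
      split <;> simp [hCnn]
  calc ∑ v, |(naam Gp γ - naam G γ) u v|
      ≤ ∑ v, if v ∈ D ∪ A then C else 0 := Finset.sum_le_sum (fun v _ => key v)
    _ = (D ∪ A).card • C := by
        rw [Finset.sum_ite_mem, Finset.univ_inter, Finset.sum_const]
    _ = ((D ∪ A).card : ℝ) * C := nsmul_eq_mul _ _
    _ ≤ (2 * Ru : ℝ) * C := by
        apply mul_le_mul_of_nonneg_right _ hCnn
        have := Finset.card_union_le D A
        have h2 : (D ∪ A).card ≤ 2 * Ru := by omega
        exact_mod_cast h2
    _ = 2 * (Ru : ℝ) / Real.sqrt (((G.degree u : ℝ) + γ) * ((δu : ℝ) + γ)) := by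
        rw [hC, div_eq_mul_inv]
end

section
/- Let G and G_p be finite simple undirected graphs on the same vertex set V such that every vertex has the same degree in G and G_p, and let γ ≥ 0 with d_u + γ > 0 for all u. Let E = S_{p,γ} − S_γ be the difference of normalised augmented adjacency matrices. For each vertex u, let R_u be a natural number bounding both the number of edges at u deleted and the number of edges at u added by the perturbation, and let δ_u be a lower bound on the degree of every vertex that u disconnects from or connects to. Then the operator norm satisfies ‖E‖₂ ≤ max_{u∈V} 2·R_u / √((d_u+γ)(δ_u+γ)). -/
lemma opNorm_le_of_rowcol {n : Type*} [Fintype n] [DecidableEq n]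
    (M : Matrix n n ℝ) (C : ℝ) (hC : 0 ≤ C)
    (hrow : ∀ u, ∑ v, |M u v| ≤ C) (hcol : ∀ v, ∑ u, |M u v| ≤ C) :
    opNorm M ≤ C := by
  rw [opNorm]
  apply ContinuousLinearMap.opNorm_le_bound _ hC
  intro x
  have hx : ∀ i, (Matrix.toEuclideanLin M x) i = M.mulVec x i := fun _ => rfl
  have key : ∑ u, (M.mulVec x u) ^ 2 ≤ C ^ 2 * ∑ v, (x v) ^ 2 := by
    have step : ∀ u, (M.mulVec x u) ^ 2 ≤ C * ∑ v, |M u v| * (x v) ^ 2 := by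
      intro u
      have h1 : (M.mulVec x u) ^ 2 ≤ (∑ v, |M u v * x v|) ^ 2 := by
        have := Finset.abs_sum_le_sum_abs (fun v => M u v * x v) Finset.univ
        calc (M.mulVec x u) ^ 2 = |M.mulVec x u| ^ 2 := (sq_abs _).symm
          _ ≤ (∑ v, |M u v * x v|) ^ 2 := by
              apply pow_le_pow_left₀ (abs_nonneg _) _
              exact this
      have h2 : (∑ v, |M u v * x v|) ^ 2 ≤ (∑ v, |M u v|) * ∑ v, |M u v| * (x v) ^ 2 := by
        have := Finset.sum_mul_sq_le_sq_mul_sq Finset.univ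
          (fun v => Real.sqrt |M u v|) (fun v => Real.sqrt |M u v| * |x v|)
        have e1 : ∀ v : n, Real.sqrt |M u v| * (Real.sqrt |M u v| * |x v|) = |M u v * x v| := by
          intro v
          rw [← mul_assoc, Real.mul_self_sqrt (abs_nonneg _), abs_mul]
        have e2 : ∀ v : n, Real.sqrt |M u v| ^ 2 = |M u v| := fun v => Real.sq_sqrt (abs_nonneg _)
        have e3 : ∀ v : n, (Real.sqrt |M u v| * |x v|) ^ 2 = |M u v| * (x v) ^ 2 := by
          intro v
          rw [mul_pow, Real.sq_sqrt (abs_nonneg _), sq_abs]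
        simp only [e1, e2, e3] at this
        exact this
      have h3 : (∑ v, |M u v|) * ∑ v, |M u v| * (x v) ^ 2 ≤ C * ∑ v, |M u v| * (x v) ^ 2 := by
        apply mul_le_mul_of_nonneg_right (hrow u)
        positivity
      linarith
    calc ∑ u, (M.mulVec x u) ^ 2 ≤ ∑ u, C * ∑ v, |M u v| * (x v) ^ 2 :=
          Finset.sum_le_sum fun u _ => step u
      _ = C * ∑ v, (∑ u, |M u v|) * (x v) ^ 2 := by
          rw [← Finset.mul_sum, Finset.sum_comm]
          congr 1; apply Finset.sum_congr rfl; intro v _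
          rw [Finset.sum_mul]
      _ ≤ C * ∑ v, C * (x v) ^ 2 := by
          apply mul_le_mul_of_nonneg_left _ hC
          apply Finset.sum_le_sum; intro v _
          exact mul_le_mul_of_nonneg_right (hcol v) (sq_nonneg _)
      _ = C ^ 2 * ∑ v, (x v) ^ 2 := by rw [← Finset.mul_sum]; ring
  rw [EuclideanSpace.norm_eq, EuclideanSpace.norm_eq]
  simp only [hx, Real.norm_eq_abs, sq_abs]
  rw [← Real.sqrt_sq hC, ← Real.sqrt_mul (sq_nonneg C)]
  exact Real.sqrt_le_sqrt key

/-- For a degree-preserving perturbation, if at each vertex `u` at most `R u` edges are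
deleted and at most `R u` added, and `δ u` lower bounds the degree of every vertex that
`u` disconnects from or connects to, then the operator norm of `E = S_{p,γ} − S_γ`
satisfies `‖E‖₂ ≤ max_u 2 R_u / √((d_u+γ)(δ_u+γ))`. -/
theorem stmt7 {V : Type*} [Fintype V] [DecidableEq V] [Nonempty V]
    (G Gp : SimpleGraph V) [DecidableRel G.Adj] [DecidableRel Gp.Adj]
    (hdeg : ∀ u, G.degree u = Gp.degree u)
    (γ : ℝ) (hγ : 0 ≤ γ) (hpos : ∀ u, 0 < (G.degree u : ℝ) + γ)
    (R : V → ℕ) (δ : V → ℕ)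
    (hRD : ∀ u, (Finset.univ.filter (fun v => G.Adj u v ∧ ¬ Gp.Adj u v)).card ≤ R u)
    (hRA : ∀ u, (Finset.univ.filter (fun v => Gp.Adj u v ∧ ¬ G.Adj u v)).card ≤ R u)
    (hδ : ∀ u v, (G.Adj u v ∧ ¬ Gp.Adj u v) ∨ (Gp.Adj u v ∧ ¬ G.Adj u v) →
      δ u ≤ G.degree v)
    (hδpos : ∀ u, 0 < (δ u : ℝ) + γ) :
    opNorm (naam Gp γ - naam G γ) ≤
      Finset.univ.sup' Finset.univ_nonempty
        (fun u => 2 * (R u : ℝ) /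
          Real.sqrt (((G.degree u : ℝ) + γ) * ((δ u : ℝ) + γ))) := by
  set f : V → ℝ := fun u => (Real.sqrt ((G.degree u : ℝ) + γ))⁻¹ with hf_def
  have hsqrt_pos : ∀ u, 0 < Real.sqrt ((G.degree u : ℝ) + γ) :=
    fun u => Real.sqrt_pos.2 (hpos u)
  have hf_pos : ∀ u, 0 < f u := fun u => inv_pos.2 (hsqrt_pos u)
  have hE : ∀ u v, (naam Gp γ - naam G γ) u v =
      f u * f v * ((if Gp.Adj u v then (1:ℝ) else 0) - (if G.Adj u v then (1:ℝ) else 0)) := by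
    intro u v
    simp only [naam, Matrix.sub_apply, Matrix.mul_diagonal, Matrix.diagonal_mul,
      Matrix.add_apply, Matrix.smul_apply, Matrix.one_apply, SimpleGraph.adjMatrix_apply,
      ← hdeg, hf_def]
    ring_nf
  have habs : ∀ u v, |(naam Gp γ - naam G γ) u v| =
      f u * f v * (if (G.Adj u v ∧ ¬ Gp.Adj u v) ∨ (Gp.Adj u v ∧ ¬ G.Adj u v)
        then (1:ℝ) else 0) := by
    intro u v
    rw [hE u v, abs_mul, abs_of_nonneg (by positivity : (0:ℝ) ≤ f u * f v)]
    congr 1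
    by_cases h1 : G.Adj u v <;> by_cases h2 : Gp.Adj u v <;> simp [h1, h2]
  set g : V → ℝ := fun u => 2 * (R u : ℝ) /
      Real.sqrt (((G.degree u : ℝ) + γ) * ((δ u : ℝ) + γ)) with hg_def
  have hg_nonneg : ∀ u, 0 ≤ g u := by
    intro u
    apply div_nonneg (by positivity) (Real.sqrt_nonneg _)
  have hrow : ∀ u, ∑ v, |(naam Gp γ - naam G γ) u v| ≤ g u := by
    intro u
    have hsum : ∑ v, |(naam Gp γ - naam G γ) u v| =
        ∑ v ∈ Finset.univ.filter (fun v =>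
          (G.Adj u v ∧ ¬ Gp.Adj u v) ∨ (Gp.Adj u v ∧ ¬ G.Adj u v)), f u * f v := by
      rw [Finset.sum_filter]
      apply Finset.sum_congr rfl
      intro v _
      rw [habs u v]
      by_cases h : (G.Adj u v ∧ ¬ Gp.Adj u v) ∨ (Gp.Adj u v ∧ ¬ G.Adj u v) <;> simp [h]
    rw [hsum]
    set S := Finset.univ.filter (fun v =>
      (G.Adj u v ∧ ¬ Gp.Adj u v) ∨ (Gp.Adj u v ∧ ¬ G.Adj u v)) with hS_def
    have hcard : S.card ≤ 2 * R u := by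
      have : S = (Finset.univ.filter (fun v => G.Adj u v ∧ ¬ Gp.Adj u v)) ∪
          (Finset.univ.filter (fun v => Gp.Adj u v ∧ ¬ G.Adj u v)) := by
        rw [hS_def, Finset.filter_or]
      rw [this]
      calc _ ≤ _ := Finset.card_union_le _ _
        _ ≤ R u + R u := add_le_add (hRD u) (hRA u)
        _ = 2 * R u := (two_mul _).symm
    have hterm : ∀ v ∈ S, f u * f v ≤ f u * (Real.sqrt ((δ u : ℝ) + γ))⁻¹ := by
      intro v hv
      apply mul_le_mul_of_nonneg_left _ (hf_pos u).le
      apply inv_anti₀ (Real.sqrt_pos.2 (hδpos u))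
      apply Real.sqrt_le_sqrt
      have := hδ u v (by simpa [hS_def] using hv)
      have : (δ u : ℝ) ≤ (G.degree v : ℝ) := by exact_mod_cast this
      linarith
    calc ∑ v ∈ S, f u * f v ≤ ∑ v ∈ S, f u * (Real.sqrt ((δ u : ℝ) + γ))⁻¹ :=
          Finset.sum_le_sum hterm
      _ = S.card * (f u * (Real.sqrt ((δ u : ℝ) + γ))⁻¹) := by
          rw [Finset.sum_const, nsmul_eq_mul]
      _ ≤ (2 * R u : ℝ) * (f u * (Real.sqrt ((δ u : ℝ) + γ))⁻¹) := by
          apply mul_le_mul_of_nonneg_right _ (by positivity)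
          exact_mod_cast hcard
      _ = g u := by
          show _ = 2 * (R u : ℝ) / Real.sqrt (((G.degree u : ℝ) + γ) * ((δ u : ℝ) + γ))
          show 2 * (R u : ℝ) * ((Real.sqrt ((G.degree u : ℝ) + γ))⁻¹ *
            (Real.sqrt ((δ u : ℝ) + γ))⁻¹) = _
          rw [Real.sqrt_mul (hpos u).le]
          field_simp
  have hsym : ∀ u v, (naam Gp γ - naam G γ) u v = (naam Gp γ - naam G γ) v u := by
    intro u v
    rw [hE u v, hE v u]
    simp only [SimpleGraph.adj_comm G v u, SimpleGraph.adj_comm Gp v u]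
    ring
  have hcol : ∀ v, ∑ u, |(naam Gp γ - naam G γ) u v| ≤ g v := by
    intro v
    calc ∑ u, |(naam Gp γ - naam G γ) u v| = ∑ u, |(naam Gp γ - naam G γ) v u| := by
          apply Finset.sum_congr rfl; intro u _; rw [hsym u v]
      _ ≤ g v := hrow v
  apply opNorm_le_of_rowcol
  · obtain ⟨u⟩ := ‹Nonempty V›
    exact le_trans (hg_nonneg u) (Finset.le_sup' g (Finset.mem_univ u))
  · intro u
    exact le_trans (hrow u) (Finset.le_sup' g (Finset.mem_univ u))
  · intro v
    exact le_trans (hcol v) (Finset.le_sup' g (Finset.mem_univ v))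
end

section
/- Let G and G_p be finite simple undirected graphs on the same vertex set V in which every vertex has the same degree (G_p arises from G by double edge rewirings), and let S̃ and S̃_p be their normalised augmented adjacency matrices with γ = 1 (so both are symmetric with operator norm at most 1). For each vertex u, let R_u bound both the number of edges at u deleted and the number added, and let δ_u be a lower bound on the degree of every vertex that u disconnects from or connects to. Let X⁽⁰⁾ ∈ ℝ^{n×d} have ‖X⁽⁰⁾‖_F = √d, let Θ⁽¹⁾,…,Θ⁽ᴸ⁾ ∈ ℝ^{d×d}, and define the GCN outputs X⁽ˡ⁾ = σ(S̃ X⁽ˡ⁻¹⁾ Θ⁽ˡ⁾) and X_p⁽ˡ⁾ = σ(S̃_p X_p⁽ˡ⁻¹⁾ Θ⁽ˡ⁾) with X_p⁽⁰⁾ = X⁽⁰⁾ and σ the entrywise ReLU. Then ‖X⁽ᴸ⁾ − X_p⁽ᴸ⁾‖_F ≤ √d · L · (Π_{l=1}^{L} ‖Θ⁽ˡ⁾‖₂) · max_{u∈V} 2·R_u / √((d_u+1)(δ_u+1)). -/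
/-- The Frobenius norm of a real matrix. -/
noncomputable def frobNorm {m n : Type*} [Fintype m] [Fintype n]
    (M : Matrix m n ℝ) : ℝ :=
  Real.sqrt (∑ i, ∑ j, (M i j) ^ 2)

/-- Entrywise ReLU applied to a matrix. -/
def reluM {m n : Type*} (M : Matrix m n ℝ) : Matrix m n ℝ :=
  Matrix.of fun i j => max (M i j) 0

section Aux
variable {m n : Type*} [Fintype m] [Fintype n]

lemma euclid_norm_eq (y : EuclideanSpace ℝ m) : ‖y‖ = Real.sqrt (∑ i, (y i) ^ 2) := by
  rw [EuclideanSpace.norm_eq]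
  congr 1
  exact Finset.sum_congr rfl fun i _ => by rw [Real.norm_eq_abs, sq_abs]

lemma opNorm_nonneg [DecidableEq n] (M : Matrix m n ℝ) : 0 ≤ opNorm M := norm_nonneg _

lemma opNorm_le_bound [DecidableEq n] (M : Matrix m n ℝ) (r : ℝ) (hr : 0 ≤ r)
    (h : ∀ x : n → ℝ, Real.sqrt (∑ u, (M.mulVec x u) ^ 2) ≤ r * Real.sqrt (∑ v, (x v) ^ 2)) :
    opNorm M ≤ r := by
  apply ContinuousLinearMap.opNorm_le_bound _ hr
  intro x
  rw [LinearMap.coe_toContinuousLinearMap', Matrix.toEuclideanLin_apply, euclid_norm_eq,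
    euclid_norm_eq]
  exact h _

lemma sqrt_mulVec_le_opNorm [DecidableEq n] (M : Matrix m n ℝ) (x : n → ℝ) :
    Real.sqrt (∑ u, (M.mulVec x u) ^ 2) ≤ opNorm M * Real.sqrt (∑ v, (x v) ^ 2) := by
  have := (LinearMap.toContinuousLinearMap (Matrix.toEuclideanLin M)).le_opNorm
    ((WithLp.equiv 2 (n → ℝ)).symm x)
  rwa [LinearMap.coe_toContinuousLinearMap', Matrix.toEuclideanLin_apply, euclid_norm_eq,
    euclid_norm_eq] at this

end Aux

section Schur
variable {V : Type*} [Fintype V] [DecidableEq V]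

lemma schur_test (M : Matrix V V ℝ) (p : V → ℝ) (hp : ∀ v, 0 < p v) (r : ℝ) (hr : 0 ≤ r)
    (hrow : ∀ u, ∑ v, |M u v| * p v ≤ r * p u)
    (hcol : ∀ v, ∑ u, |M u v| * p u ≤ r * p v) :
    opNorm M ≤ r := by
  apply opNorm_le_bound M r hr
  intro x
  have key : ∑ u, (M.mulVec x u) ^ 2 ≤ r ^ 2 * ∑ v, (x v) ^ 2 := by
    have step1 : ∀ u, (M.mulVec x u) ^ 2 ≤ (r * p u) * ∑ v, |M u v| / p v * (x v) ^ 2 := by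
      intro u
      have h1 : |M.mulVec x u| ≤ ∑ v, |M u v| * |x v| := by
        simpa [Matrix.mulVec, dotProduct, abs_mul] using
          Finset.abs_sum_le_sum_abs (fun v => M u v * x v) Finset.univ
      have habs : (M.mulVec x u) ^ 2 ≤ (∑ v, |M u v| * |x v|) ^ 2 := by
        calc (M.mulVec x u) ^ 2 = |M.mulVec x u| ^ 2 := (sq_abs _).symm
          _ ≤ (∑ v, |M u v| * |x v|) ^ 2 := pow_le_pow_left₀ (abs_nonneg _) h1 2
      have hcs : (∑ v, |M u v| * |x v|) ^ 2 ≤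
          (∑ v, |M u v| * p v) * (∑ v, |M u v| / p v * (x v) ^ 2) := by
        have hmain := Finset.sum_mul_sq_le_sq_mul_sq Finset.univ
          (fun v => Real.sqrt (|M u v| * p v))
          (fun v => Real.sqrt (|M u v| / p v) * |x v|)
        have e1 : ∀ v, Real.sqrt (|M u v| * p v) * (Real.sqrt (|M u v| / p v) * |x v|)
            = |M u v| * |x v| := by
          intro v
          rw [← mul_assoc, ← Real.sqrt_mul (mul_nonneg (abs_nonneg _) (hp v).le)]
          have : |M u v| * p v * (|M u v| / p v) = |M u v| ^ 2 := by
            field_simp [(hp v).ne']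
          rw [this, Real.sqrt_sq (abs_nonneg _)]
        have e2 : ∀ v, Real.sqrt (|M u v| * p v) ^ 2 = |M u v| * p v := fun v =>
          Real.sq_sqrt (mul_nonneg (abs_nonneg _) (hp v).le)
        have e3 : ∀ v, (Real.sqrt (|M u v| / p v) * |x v|) ^ 2
            = |M u v| / p v * (x v) ^ 2 := by
          intro v
          rw [mul_pow, Real.sq_sqrt (div_nonneg (abs_nonneg _) (hp v).le), sq_abs]
        calc (∑ v, |M u v| * |x v|) ^ 2
            = (∑ v, Real.sqrt (|M u v| * p v) * (Real.sqrt (|M u v| / p v) * |x v|)) ^ 2 := by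
              rw [Finset.sum_congr rfl fun v _ => (e1 v).symm]
          _ ≤ (∑ v, Real.sqrt (|M u v| * p v) ^ 2) *
                (∑ v, (Real.sqrt (|M u v| / p v) * |x v|) ^ 2) := hmain
          _ = (∑ v, |M u v| * p v) * (∑ v, |M u v| / p v * (x v) ^ 2) := by
              rw [Finset.sum_congr rfl fun v _ => e2 v, Finset.sum_congr rfl fun v _ => e3 v]
      have hsnn : 0 ≤ ∑ v, |M u v| / p v * (x v) ^ 2 :=
        Finset.sum_nonneg fun v _ => mul_nonneg (div_nonneg (abs_nonneg _) (hp v).le) (sq_nonneg _)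
      calc (M.mulVec x u) ^ 2 ≤ (∑ v, |M u v| * p v) * (∑ v, |M u v| / p v * (x v) ^ 2) :=
            habs.trans hcs
        _ ≤ (r * p u) * ∑ v, |M u v| / p v * (x v) ^ 2 :=
            mul_le_mul_of_nonneg_right (hrow u) hsnn
    calc ∑ u, (M.mulVec x u) ^ 2
        ≤ ∑ u, (r * p u) * ∑ v, |M u v| / p v * (x v) ^ 2 :=
          Finset.sum_le_sum fun u _ => step1 u
      _ = ∑ v, r * ((∑ u, |M u v| * p u) * ((x v) ^ 2 / p v)) := by
          simp_rw [Finset.mul_sum]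
          rw [Finset.sum_comm]
          refine Finset.sum_congr rfl fun v _ => ?_
          rw [Finset.sum_mul, Finset.mul_sum]
          refine Finset.sum_congr rfl fun u _ => ?_
          ring
      _ ≤ ∑ v, r * ((r * p v) * ((x v) ^ 2 / p v)) := by
          refine Finset.sum_le_sum fun v _ => ?_
          exact mul_le_mul_of_nonneg_left
            (mul_le_mul_of_nonneg_right (hcol v) (div_nonneg (sq_nonneg _) (hp v).le)) hr
      _ = r ^ 2 * ∑ v, (x v) ^ 2 := by
          rw [Finset.mul_sum]
          refine Finset.sum_congr rfl fun v _ => ?_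
          field_simp [(hp v).ne']
  calc Real.sqrt (∑ u, (M.mulVec x u) ^ 2) ≤ Real.sqrt (r ^ 2 * ∑ v, (x v) ^ 2) :=
        Real.sqrt_le_sqrt key
    _ = r * Real.sqrt (∑ v, (x v) ^ 2) := by
        rw [Real.sqrt_mul (sq_nonneg r), Real.sqrt_sq hr]

end Schur

section Frob
open Matrix
variable {m n k : Type*} [Fintype m] [Fintype n] [Fintype k]

lemma frobNorm_nonneg (M : Matrix m n ℝ) : 0 ≤ frobNorm M := Real.sqrt_nonneg _

lemma frobNorm_add (A B : Matrix m n ℝ) : frobNorm (A + B) ≤ frobNorm A + frobNorm B := by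
  have h : ∀ C : Matrix m n ℝ,
      frobNorm C = ‖(WithLp.equiv 2 ((m × n) → ℝ)).symm (fun p => C p.1 p.2)‖ := by
    intro C
    rw [euclid_norm_eq, frobNorm]
    congr 1
    exact (Fintype.sum_prod_type (f := fun p : m × n => C p.1 p.2 ^ 2)).symm
  rw [h, h, h]
  exact norm_add_le ((WithLp.equiv 2 ((m × n) → ℝ)).symm (fun p => A p.1 p.2))
    ((WithLp.equiv 2 ((m × n) → ℝ)).symm (fun p => B p.1 p.2))

lemma frobNorm_transpose (M : Matrix m n ℝ) : frobNorm Mᵀ = frobNorm M := by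
  rw [frobNorm, frobNorm, Finset.sum_comm]
  rfl

lemma frobNorm_relu_sub (A B : Matrix m n ℝ) :
    frobNorm (reluM A - reluM B) ≤ frobNorm (A - B) := by
  apply Real.sqrt_le_sqrt
  refine Finset.sum_le_sum fun i _ => Finset.sum_le_sum fun j _ => ?_
  have h1 : |(reluM A - reluM B) i j| ≤ |(A - B) i j| := by
    simpa [reluM, Matrix.sub_apply] using abs_max_sub_max_le_abs (A i j) (B i j) 0
  calc ((reluM A - reluM B) i j) ^ 2 = |(reluM A - reluM B) i j| ^ 2 := (sq_abs _).symm
    _ ≤ |(A - B) i j| ^ 2 := pow_le_pow_left₀ (abs_nonneg _) h1 2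
    _ = ((A - B) i j) ^ 2 := sq_abs _

lemma frob_mul_left [DecidableEq m] (M : Matrix k m ℝ) (N : Matrix m n ℝ) :
    frobNorm (M * N) ≤ opNorm M * frobNorm N := by
  have key : ∑ j, ∑ i, ((M * N) i j) ^ 2 ≤ (opNorm M) ^ 2 * ∑ j, ∑ i, (N i j) ^ 2 := by
    rw [Finset.mul_sum]
    refine Finset.sum_le_sum fun j _ => ?_
    have h1 := sqrt_mulVec_le_opNorm M (fun x => N x j)
    have h2 : ∑ i, ((M * N) i j) ^ 2 = ∑ i, (M.mulVec (fun x => N x j) i) ^ 2 := by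
      refine Finset.sum_congr rfl fun i _ => ?_
      simp [Matrix.mul_apply, Matrix.mulVec, dotProduct]
    rw [h2]
    have h3 : 0 ≤ ∑ i, (M.mulVec (fun x => N x j) i) ^ 2 :=
      Finset.sum_nonneg fun _ _ => sq_nonneg _
    calc ∑ i, (M.mulVec (fun x => N x j) i) ^ 2
        = Real.sqrt (∑ i, (M.mulVec (fun x => N x j) i) ^ 2) ^ 2 := (Real.sq_sqrt h3).symm
      _ ≤ (opNorm M * Real.sqrt (∑ x, (N x j) ^ 2)) ^ 2 :=
          pow_le_pow_left₀ (Real.sqrt_nonneg _) h1 2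
      _ = (opNorm M) ^ 2 * ∑ x, (N x j) ^ 2 := by
          rw [mul_pow, Real.sq_sqrt (Finset.sum_nonneg fun _ _ => sq_nonneg _)]
  have e1 : frobNorm (M * N) = Real.sqrt (∑ j, ∑ i, ((M * N) i j) ^ 2) := by
    rw [frobNorm, Finset.sum_comm]
  have e2 : frobNorm N = Real.sqrt (∑ j, ∑ i, (N i j) ^ 2) := by
    rw [frobNorm, Finset.sum_comm]
  rw [e1, e2]
  calc Real.sqrt (∑ j, ∑ i, ((M * N) i j) ^ 2)
      ≤ Real.sqrt ((opNorm M) ^ 2 * ∑ j, ∑ i, (N i j) ^ 2) := Real.sqrt_le_sqrt key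
    _ = opNorm M * Real.sqrt (∑ j, ∑ i, (N i j) ^ 2) := by
        rw [Real.sqrt_mul (sq_nonneg _), Real.sqrt_sq (opNorm_nonneg M)]

lemma opNorm_transpose [DecidableEq m] [DecidableEq n] (M : Matrix m n ℝ) :
    opNorm Mᵀ = opNorm M := by
  have h : Mᵀ = Mᴴ := by
    ext i j; simp [Matrix.conjTranspose_apply]
  rw [opNorm, h, Matrix.toEuclideanLin_conjTranspose_eq_adjoint,
    LinearMap.adjoint_toContinuousLinearMap]
  exact ContinuousLinearMap.adjoint.norm_map _

lemma frob_mul_right [DecidableEq n] [DecidableEq k] (N : Matrix m n ℝ) (Θ : Matrix n k ℝ) :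
    frobNorm (N * Θ) ≤ frobNorm N * opNorm Θ := by
  rw [← frobNorm_transpose (N * Θ), Matrix.transpose_mul]
  calc frobNorm (Θᵀ * Nᵀ) ≤ opNorm Θᵀ * frobNorm Nᵀ := frob_mul_left Θᵀ Nᵀ
    _ = frobNorm N * opNorm Θ := by rw [opNorm_transpose, frobNorm_transpose]; ring

end Frob

section Naam
open Matrix
variable {V : Type*} [Fintype V] [DecidableEq V]

lemma naam_apply (G : SimpleGraph V) [DecidableRel G.Adj] (γ : ℝ) (u v : V) :
    naam G γ u v = (Real.sqrt ((G.degree u : ℝ) + γ))⁻¹ *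
      ((G.adjMatrix ℝ) u v + γ * (if u = v then 1 else 0)) *
        (Real.sqrt ((G.degree v : ℝ) + γ))⁻¹ := by
  rw [naam, Matrix.mul_diagonal, Matrix.diagonal_mul]
  simp [Matrix.one_apply]

lemma naam_symm (G : SimpleGraph V) [DecidableRel G.Adj] (γ : ℝ) (u v : V) :
    naam G γ u v = naam G γ v u := by
  rw [naam_apply, naam_apply]
  have h1 : (G.adjMatrix ℝ) u v = (G.adjMatrix ℝ) v u := by
    simp [SimpleGraph.adjMatrix_apply, G.adj_comm]
  have h2 : (if u = v then (1:ℝ) else 0) = (if v = u then 1 else 0) := by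
    simp [eq_comm]
  rw [h1, h2]; ring

lemma naam_one_nonneg (G : SimpleGraph V) [DecidableRel G.Adj] (u v : V) :
    0 ≤ naam G 1 u v := by
  rw [naam_apply]
  have h1 : (0:ℝ) ≤ (G.adjMatrix ℝ) u v := by
    simp only [SimpleGraph.adjMatrix_apply]; positivity
  positivity

lemma row_sum_adj (G : SimpleGraph V) [DecidableRel G.Adj] (u : V) :
    ∑ v, (G.adjMatrix ℝ) u v = (G.degree u : ℝ) := by
  simp [SimpleGraph.adjMatrix_apply, SimpleGraph.degree, SimpleGraph.neighborFinset_eq_filter,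
    Finset.sum_boole]

lemma opNorm_naam_one_le (G : SimpleGraph V) [DecidableRel G.Adj] :
    opNorm (naam G 1) ≤ 1 := by
  have hp : ∀ v : V, 0 < Real.sqrt ((G.degree v : ℝ) + 1) :=
    fun v => Real.sqrt_pos.mpr (by positivity)
  have hrow : ∀ u, ∑ v, |naam G 1 u v| * Real.sqrt ((G.degree v : ℝ) + 1) ≤
      1 * Real.sqrt ((G.degree u : ℝ) + 1) := by
    intro u
    have he : ∀ v, |naam G 1 u v| * Real.sqrt ((G.degree v : ℝ) + 1) =
        (Real.sqrt ((G.degree u : ℝ) + 1))⁻¹ *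
          ((G.adjMatrix ℝ) u v + (if u = v then 1 else 0)) := by
      intro v
      rw [abs_of_nonneg (naam_one_nonneg G u v), naam_apply]
      rw [mul_assoc, inv_mul_cancel₀ (hp v).ne', mul_one, one_mul]
    rw [Finset.sum_congr rfl fun v _ => he v, ← Finset.mul_sum, one_mul]
    rw [Finset.sum_add_distrib, row_sum_adj, Finset.sum_ite_eq Finset.univ u (fun _ => (1:ℝ))]
    simp only [Finset.mem_univ, if_true]
    calc (Real.sqrt ((G.degree u : ℝ) + 1))⁻¹ * ((G.degree u : ℝ) + 1)
        = (Real.sqrt ((G.degree u : ℝ) + 1))⁻¹ *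
            (Real.sqrt ((G.degree u : ℝ) + 1) * Real.sqrt ((G.degree u : ℝ) + 1)) := by
          rw [Real.mul_self_sqrt (by positivity)]
      _ ≤ Real.sqrt ((G.degree u : ℝ) + 1) := le_of_eq (inv_mul_cancel_left₀ (hp u).ne' _)
  apply schur_test (naam G 1) (fun v => Real.sqrt ((G.degree v : ℝ) + 1)) hp 1 zero_le_one hrow
  intro v
  have : ∀ u, |naam G 1 u v| = |naam G 1 v u| := fun u => by rw [naam_symm]
  rw [Finset.sum_congr rfl fun u _ => by rw [this u]]
  exact hrow v

end Naam

section Delta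
open Matrix
variable {V : Type*} [Fintype V] [DecidableEq V]

lemma opNorm_naam_sub_le (G Gp : SimpleGraph V) [DecidableRel G.Adj] [DecidableRel Gp.Adj]
    [Nonempty V]
    (hdeg : ∀ u, G.degree u = Gp.degree u)
    (R δ : V → ℕ)
    (hRD : ∀ u, (Finset.univ.filter (fun v => G.Adj u v ∧ ¬ Gp.Adj u v)).card ≤ R u)
    (hRA : ∀ u, (Finset.univ.filter (fun v => Gp.Adj u v ∧ ¬ G.Adj u v)).card ≤ R u)
    (hδ : ∀ u v, (G.Adj u v ∧ ¬ Gp.Adj u v) ∨ (Gp.Adj u v ∧ ¬ G.Adj u v) → δ u ≤ G.degree v) :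
    opNorm (naam G 1 - naam Gp 1) ≤
      Finset.univ.sup' Finset.univ_nonempty
        (fun u => 2 * (R u : ℝ) / Real.sqrt (((G.degree u : ℝ) + 1) * ((δ u : ℝ) + 1))) := by
  classical
  set c : V → ℝ := fun u => (Real.sqrt ((G.degree u : ℝ) + 1))⁻¹ with hc
  set Ms : ℝ := Finset.univ.sup' Finset.univ_nonempty
      (fun u => 2 * (R u : ℝ) / Real.sqrt (((G.degree u : ℝ) + 1) * ((δ u : ℝ) + 1))) with hMs
  have hcpos : ∀ u, 0 < Real.sqrt ((G.degree u : ℝ) + 1) :=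
    fun u => Real.sqrt_pos.mpr (by positivity)
  have hent : ∀ u v, (naam G 1 - naam Gp 1) u v =
      c u * ((G.adjMatrix ℝ) u v - (Gp.adjMatrix ℝ) u v) * c v := by
    intro u v
    rw [Matrix.sub_apply, naam_apply, naam_apply, ← hdeg u, ← hdeg v, hc]
    ring
  have hrow : ∀ u, ∑ v, |(naam G 1 - naam Gp 1) u v| ≤
      2 * (R u : ℝ) / Real.sqrt (((G.degree u : ℝ) + 1) * ((δ u : ℝ) + 1)) := by
    intro u
    set S : Finset V := Finset.univ.filter
      (fun v => (G.Adj u v ∧ ¬ Gp.Adj u v) ∨ (Gp.Adj u v ∧ ¬ G.Adj u v)) with hS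
    have hzero : ∀ v ∈ Finset.univ, v ∉ S → |(naam G 1 - naam Gp 1) u v| = 0 := by
      intro v _ hv
      rw [hS, Finset.mem_filter] at hv
      push_neg at hv
      have hadj : (G.adjMatrix ℝ) u v = (Gp.adjMatrix ℝ) u v := by
        have h := hv (Finset.mem_univ v)
        by_cases hG : G.Adj u v
        · have hGp : Gp.Adj u v := by tauto
          simp [SimpleGraph.adjMatrix_apply, hG, hGp]
        · have hGp : ¬ Gp.Adj u v := by tauto
          simp [SimpleGraph.adjMatrix_apply, hG, hGp]
      rw [hent, hadj, sub_self, mul_zero, zero_mul, abs_zero]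
    have hterm : ∀ v ∈ S, |(naam G 1 - naam Gp 1) u v| ≤
        c u * (Real.sqrt ((δ u : ℝ) + 1))⁻¹ := by
      intro v hv
      rw [hS, Finset.mem_filter] at hv
      have hd : (δ u : ℝ) + 1 ≤ (G.degree v : ℝ) + 1 := by
        have := hδ u v hv.2
        exact_mod_cast Nat.add_le_add_right this 1
      have hcv : c v ≤ (Real.sqrt ((δ u : ℝ) + 1))⁻¹ := by
        rw [hc]
        exact inv_anti₀ (Real.sqrt_pos.mpr (by positivity)) (Real.sqrt_le_sqrt hd)
      have habs1 : |(G.adjMatrix ℝ) u v - (Gp.adjMatrix ℝ) u v| ≤ 1 := by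
        rcases hv.2 with ⟨h1, h2⟩ | ⟨h1, h2⟩ <;>
          simp [SimpleGraph.adjMatrix_apply, h1, h2]
      have hcnn : ∀ w, 0 ≤ c w := fun w => inv_nonneg.mpr (Real.sqrt_nonneg _)
      calc |(naam G 1 - naam Gp 1) u v|
          = c u * |(G.adjMatrix ℝ) u v - (Gp.adjMatrix ℝ) u v| * c v := by
            rw [hent, abs_mul, abs_mul, abs_of_nonneg (hcnn u), abs_of_nonneg (hcnn v)]
        _ ≤ c u * 1 * (Real.sqrt ((δ u : ℝ) + 1))⁻¹ := by
            apply mul_le_mul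
            · exact mul_le_mul_of_nonneg_left habs1 (hcnn u)
            · exact hcv
            · exact hcnn v
            · positivity
        _ = c u * (Real.sqrt ((δ u : ℝ) + 1))⁻¹ := by rw [mul_one]
    have hcard : (S.card : ℝ) ≤ 2 * (R u : ℝ) := by
      have h1 : S.card ≤ (Finset.univ.filter (fun v => G.Adj u v ∧ ¬ Gp.Adj u v)).card +
          (Finset.univ.filter (fun v => Gp.Adj u v ∧ ¬ G.Adj u v)).card := by
        rw [hS, Finset.filter_or]
        exact Finset.card_union_le _ _
      have h2 : S.card ≤ 2 * R u := by
        have := add_le_add (hRD u) (hRA u)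
        omega
      exact_mod_cast h2
    have hq : c u * (Real.sqrt ((δ u : ℝ) + 1))⁻¹ =
        (Real.sqrt (((G.degree u : ℝ) + 1) * ((δ u : ℝ) + 1)))⁻¹ := by
      rw [hc, Real.sqrt_mul (by positivity), mul_inv]
    calc ∑ v, |(naam G 1 - naam Gp 1) u v|
        = ∑ v ∈ S, |(naam G 1 - naam Gp 1) u v| :=
          (Finset.sum_subset (Finset.subset_univ S) hzero).symm
      _ ≤ S.card • (c u * (Real.sqrt ((δ u : ℝ) + 1))⁻¹) :=
          Finset.sum_le_card_nsmul S _ _ hterm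
      _ = (S.card : ℝ) * (c u * (Real.sqrt ((δ u : ℝ) + 1))⁻¹) := by
          rw [nsmul_eq_mul]
      _ ≤ 2 * (R u : ℝ) * (c u * (Real.sqrt ((δ u : ℝ) + 1))⁻¹) := by
          apply mul_le_mul_of_nonneg_right hcard
          have := fun w => inv_nonneg.mpr (Real.sqrt_nonneg ((G.degree w : ℝ) + 1))
          positivity
      _ = 2 * (R u : ℝ) / Real.sqrt (((G.degree u : ℝ) + 1) * ((δ u : ℝ) + 1)) := by
          rw [hq, div_eq_mul_inv]
  have hsym : ∀ u v, (naam G 1 - naam Gp 1) u v = (naam G 1 - naam Gp 1) v u := by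
    intro u v
    rw [Matrix.sub_apply, Matrix.sub_apply, naam_symm G, naam_symm Gp]
  have hMnn : ∀ u, (0:ℝ) ≤ 2 * (R u : ℝ) / Real.sqrt (((G.degree u : ℝ) + 1) * ((δ u : ℝ) + 1)) :=
    fun u => div_nonneg (by positivity) (Real.sqrt_nonneg _)
  have hle : ∀ u, 2 * (R u : ℝ) / Real.sqrt (((G.degree u : ℝ) + 1) * ((δ u : ℝ) + 1)) ≤ Ms := by
    intro u
    rw [hMs]
    exact Finset.le_sup'
      (fun u => 2 * (R u : ℝ) / Real.sqrt (((G.degree u : ℝ) + 1) * ((δ u : ℝ) + 1)))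
      (Finset.mem_univ u)
  apply schur_test _ (fun _ => (1:ℝ)) (fun _ => one_pos) Ms
  · exact le_trans (hMnn (Classical.arbitrary V)) (hle _)
  · intro u
    simp only [mul_one]
    exact le_trans (hrow u) (hle u)
  · intro v
    simp only [mul_one]
    calc ∑ u, |(naam G 1 - naam Gp 1) u v| = ∑ u, |(naam G 1 - naam Gp 1) v u| := by
          refine Finset.sum_congr rfl fun u _ => ?_
          rw [hsym]
      _ ≤ Ms := le_trans (hrow v) (hle v)

end Delta

lemma frobNorm_relu_le {m n : Type*} [Fintype m] [Fintype n] (A : Matrix m n ℝ) :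
    frobNorm (reluM A) ≤ frobNorm A := by
  have hz : reluM (0 : Matrix m n ℝ) = 0 := by
    ext i j; simp [reluM]
  simpa [hz] using frobNorm_relu_sub A (0 : Matrix m n ℝ)

/-- Corollary 1: for a degree-preserving perturbation (double edge rewiring), the GCN
outputs computed with `S̃ = naam G 1` and `S̃_p = naam G_p 1` satisfy
`‖X⁽ᴸ⁾ − X_p⁽ᴸ⁾‖_F ≤ √d L (Π_l ‖Θ⁽ˡ⁾‖₂) max_u 2 R_u / √((d_u+1)(δ_u+1))`. -/
theorem stmt15 {V : Type*} [Fintype V] [DecidableEq V] [Nonempty V] {d : ℕ}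
    (G Gp : SimpleGraph V) [DecidableRel G.Adj] [DecidableRel Gp.Adj]
    (hdeg : ∀ u, G.degree u = Gp.degree u)
    (R : V → ℕ) (δ : V → ℕ)
    (hRD : ∀ u, (Finset.univ.filter (fun v => G.Adj u v ∧ ¬ Gp.Adj u v)).card ≤ R u)
    (hRA : ∀ u, (Finset.univ.filter (fun v => Gp.Adj u v ∧ ¬ G.Adj u v)).card ≤ R u)
    (hδ : ∀ u v, (G.Adj u v ∧ ¬ Gp.Adj u v) ∨ (Gp.Adj u v ∧ ¬ G.Adj u v) →
      δ u ≤ G.degree v)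
    (L : ℕ) (Θ : ℕ → Matrix (Fin d) (Fin d) ℝ)
    (X Xp : ℕ → Matrix V (Fin d) ℝ)
    (hX0 : frobNorm (X 0) = Real.sqrt d) (hXp0 : Xp 0 = X 0)
    (hrec : ∀ l < L, X (l + 1) = reluM (naam G 1 * X l * Θ (l + 1)))
    (hrecp : ∀ l < L, Xp (l + 1) = reluM (naam Gp 1 * Xp l * Θ (l + 1))) :
    frobNorm (X L - Xp L) ≤
      Real.sqrt d * (L : ℝ) * (∏ l ∈ Finset.Icc 1 L, opNorm (Θ l)) *
        Finset.univ.sup' Finset.univ_nonempty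
          (fun u => 2 * (R u : ℝ) /
            Real.sqrt (((G.degree u : ℝ) + 1) * ((δ u : ℝ) + 1))) := by
  classical
  set Sg := naam G 1 with hSgdef
  set Sp := naam Gp 1 with hSpdef
  set Ms : ℝ := Finset.univ.sup' Finset.univ_nonempty
      (fun u => 2 * (R u : ℝ) /
        Real.sqrt (((G.degree u : ℝ) + 1) * ((δ u : ℝ) + 1))) with hMsdef
  have hMnn : 0 ≤ Ms := by
    refine le_trans ?_ (Finset.le_sup'
      (fun u => 2 * (R u : ℝ) / Real.sqrt (((G.degree u : ℝ) + 1) * ((δ u : ℝ) + 1)))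
      (Finset.mem_univ (Classical.arbitrary V)))
    exact div_nonneg (by positivity) (Real.sqrt_nonneg _)
  have hSg : opNorm Sg ≤ 1 := opNorm_naam_one_le G
  have hSp : opNorm Sp ≤ 1 := opNorm_naam_one_le Gp
  have hΔ : opNorm (Sg - Sp) ≤ Ms := opNorm_naam_sub_le G Gp hdeg R δ hRD hRA hδ
  have main : ∀ l, l ≤ L →
      frobNorm (X l) ≤ Real.sqrt d * ∏ i ∈ Finset.Icc 1 l, opNorm (Θ i) ∧
      frobNorm (X l - Xp l) ≤
        Real.sqrt d * (l : ℝ) * (∏ i ∈ Finset.Icc 1 l, opNorm (Θ i)) * Ms := by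
    intro l
    induction l with
    | zero =>
      intro _
      constructor
      · rw [show Finset.Icc 1 0 = (∅ : Finset ℕ) from Finset.Icc_eq_empty (by omega),
          Finset.prod_empty, mul_one]
        exact le_of_eq hX0
      · rw [hXp0, sub_self]
        have h0 : frobNorm (0 : Matrix V (Fin d) ℝ) = 0 := by
          simp [frobNorm]
        rw [h0]
        simp
    | succ l ih =>
      intro hl1
      have hlL : l < L := Nat.lt_of_succ_le hl1
      obtain ⟨ha, hb⟩ := ih (le_of_lt hlL)
      have hprod : ∏ i ∈ Finset.Icc 1 (l + 1), opNorm (Θ i) =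
          (∏ i ∈ Finset.Icc 1 l, opNorm (Θ i)) * opNorm (Θ (l + 1)) :=
        Finset.prod_Icc_succ_top (by omega) _
      set P := ∏ i ∈ Finset.Icc 1 l, opNorm (Θ i) with hPdef
      have hPnn : 0 ≤ P := Finset.prod_nonneg fun i _ => opNorm_nonneg _
      have hTnn : 0 ≤ opNorm (Θ (l + 1)) := opNorm_nonneg _
      have hdnn : (0:ℝ) ≤ Real.sqrt d := Real.sqrt_nonneg _
      constructor
      · rw [hrec l hlL, hprod]
        calc frobNorm (reluM (Sg * X l * Θ (l + 1)))
            ≤ frobNorm (Sg * X l * Θ (l + 1)) := frobNorm_relu_le _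
          _ ≤ frobNorm (Sg * X l) * opNorm (Θ (l + 1)) := frob_mul_right _ _
          _ ≤ (opNorm Sg * frobNorm (X l)) * opNorm (Θ (l + 1)) :=
              mul_le_mul_of_nonneg_right (frob_mul_left _ _) hTnn
          _ ≤ (1 * (Real.sqrt d * P)) * opNorm (Θ (l + 1)) := by
              apply mul_le_mul_of_nonneg_right _ hTnn
              exact mul_le_mul hSg ha (frobNorm_nonneg _) zero_le_one
          _ = Real.sqrt d * (P * opNorm (Θ (l + 1))) := by ring
      · rw [hrec l hlL, hrecp l hlL, hprod]
        have hid : Sg * X l * Θ (l + 1) - Sp * Xp l * Θ (l + 1)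
            = ((Sg - Sp) * X l + Sp * (X l - Xp l)) * Θ (l + 1) := by
          rw [Matrix.add_mul, Matrix.sub_mul, Matrix.sub_mul, Matrix.mul_sub, Matrix.sub_mul]
          abel
        have h1 : frobNorm ((Sg - Sp) * X l) ≤ Ms * (Real.sqrt d * P) :=
          le_trans (frob_mul_left _ _)
            (mul_le_mul hΔ ha (frobNorm_nonneg _) hMnn)
        have h2 : frobNorm (Sp * (X l - Xp l)) ≤ Real.sqrt d * (l : ℝ) * P * Ms := by
          refine le_trans (frob_mul_left _ _) ?_
          calc opNorm Sp * frobNorm (X l - Xp l) ≤ 1 * frobNorm (X l - Xp l) :=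
                mul_le_mul_of_nonneg_right hSp (frobNorm_nonneg _)
            _ = frobNorm (X l - Xp l) := one_mul _
            _ ≤ Real.sqrt d * (l : ℝ) * P * Ms := hb
        calc frobNorm (reluM (Sg * X l * Θ (l + 1)) - reluM (Sp * Xp l * Θ (l + 1)))
            ≤ frobNorm (Sg * X l * Θ (l + 1) - Sp * Xp l * Θ (l + 1)) := frobNorm_relu_sub _ _
          _ = frobNorm (((Sg - Sp) * X l + Sp * (X l - Xp l)) * Θ (l + 1)) := by rw [hid]
          _ ≤ frobNorm ((Sg - Sp) * X l + Sp * (X l - Xp l)) * opNorm (Θ (l + 1)) :=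
              frob_mul_right _ _
          _ ≤ (frobNorm ((Sg - Sp) * X l) + frobNorm (Sp * (X l - Xp l))) * opNorm (Θ (l + 1)) :=
              mul_le_mul_of_nonneg_right (frobNorm_add _ _) hTnn
          _ ≤ (Ms * (Real.sqrt d * P) + Real.sqrt d * (l : ℝ) * P * Ms) * opNorm (Θ (l + 1)) :=
              mul_le_mul_of_nonneg_right (add_le_add h1 h2) hTnn
          _ = Real.sqrt d * ((l : ℝ) + 1) * (P * opNorm (Θ (l + 1))) * Ms := by ring
          _ = Real.sqrt d * ((l + 1 : ℕ) : ℝ) * (P * opNorm (Θ (l + 1))) * Ms := by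
              push_cast; ring
  exact (main L le_rfl).2
end
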